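/- Let x ≥ 2 be an integer and let m be a positive integer. Then the pseudoachromatic index ψ(m) of the complete graph K_m satisfies: ψ(m) ≤ 2x(m−x−1) + 1 if 4x² − x ≤ m ≤ 4x² + 3x − 1, and ψ(m) ≤ ⌊(m(m−1)/2)/(x+1)⌋ if 4x² + 3x ≤ m ≤ 4(x+1)² − (x+1) − 1. -/

import Mathlib

/-- A complete edge-colouring of the complete graph `K_m` with `k` colours:
every colour appears on some edge, and every two distinct colours appear
on two edges sharing a common vertex. -/
def IsCompleteEdgeColouring {m k : ℕ} (Γ : Sym2 (Fin m) → Fin k) : Prop :=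
  (∀ c : Fin k, ∃ x y : Fin m, x ≠ y ∧ Γ s(x, y) = c) ∧
  (∀ c₁ c₂ : Fin k, c₁ ≠ c₂ →
    ∃ x y z : Fin m, x ≠ y ∧ x ≠ z ∧ Γ s(x, y) = c₁ ∧ Γ s(x, z) = c₂)

/-- The pseudoachromatic index of the complete graph `K_m`: the largest number of
colours in a complete edge-colouring of `K_m`. -/
noncomputable def pseudoachromaticIndex (m : ℕ) : ℕ :=
  sSup {k : ℕ | ∃ Γ : Sym2 (Fin m) → Fin k, IsCompleteEdgeColouring Γ}

/-! Take a complete colouring of `K_m` with `k` colours. If every colour class has more than `x`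
edges, then `k (x + 1) ≤ C(m, 2)`. Otherwise some class has `a ≤ x` edges, covering a set `S` of
`s ≤ 2a` vertices. Every other colour is adjacent to this class, hence occurs on an edge meeting
`S`, so `k - 1 + a ≤ C(m, 2) - C(m - s, 2)`, which yields `k ≤ 2x(m - x - 1) + 1`. On the first
range of `m` the second bound dominates, on the second range the first one does. -/

open Finset

section EdgesMeetingSet

variable {α : Type*} [Fintype α] [DecidableEq α]

theorem card_filter_not_isDiag : #{e : Sym2 α | ¬e.IsDiag} = (Fintype.card α).choose 2 := by
  rw [← Sym2.card_subtype_not_diag, Fintype.card_subtype]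

def edgesMeeting (S : Finset α) : Finset (Sym2 α) := {e | ¬e.IsDiag ∧ ∃ v ∈ S, v ∈ e}

theorem card_edgesMeeting_add_choose_two_le (S : Finset α) :
    #(edgesMeeting S) + (Fintype.card α - #S).choose 2 ≤ (Fintype.card α).choose 2 := by
  have avoiding : Sᶜ.offDiag.image Sym2.mk.uncurry ⊆
      ({e | ¬e.IsDiag ∧ ¬∃ v ∈ S, v ∈ e} : Finset (Sym2 α)) := by
    simp only [subset_iff, mem_image, mem_offDiag, mem_compl, mem_filter_univ]
    rintro _ ⟨⟨u, w⟩, ⟨hu, hw, huw⟩, rfl⟩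
    simp only [Function.uncurry_apply_pair, Sym2.mk_isDiag_iff, Sym2.mem_iff]
    exact ⟨huw, fun ⟨v, hv, hvuw⟩ => hvuw.elim (fun h => hu (h ▸ hv)) (fun h => hw (h ▸ hv))⟩
  have hcard := card_le_card avoiding
  rw [Sym2.card_image_offDiag, card_compl] at hcard
  have split := card_filter_add_card_filter_not (s := ({e | ¬e.IsDiag} : Finset (Sym2 α)))
    (fun e => ∃ v ∈ S, v ∈ e)
  rw [filter_filter, filter_filter, card_filter_not_isDiag] at split
  rw [edgesMeeting]
  omega

end EdgesMeetingSet

theorem le_of_add_add_choose_two_le {m k a s x : ℕ} (hsa : s ≤ 2 * a) (hax : a ≤ x)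
    (hxm : 2 * x + 1 ≤ m) (h : k + a + (m - s).choose 2 ≤ m.choose 2 + 1) :
    k ≤ 2 * x * (m - x - 1) + 1 := by
  have hsm : s ≤ m := by omega
  have hq : (k : ℚ) + a + (m - s) * (m - s - 1) / 2 ≤ m * (m - 1) / 2 + 1 := by
    have := (Nat.cast_le (α := ℚ)).mpr h
    push_cast [Nat.cast_choose_two, Nat.cast_sub hsm] at this
    exact this
  rw [show m - x - 1 = m - (x + 1) by omega, ← Nat.cast_le (α := ℚ)]
  push_cast [Nat.cast_sub (show x + 1 ≤ m by omega)]
  have hs : (s : ℚ) ≤ 2 * x := by exact_mod_cast hsa.trans (by omega)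
  have hq' : (2 * x + 1 : ℚ) ≤ m := by exact_mod_cast hxm
  have ha : (s : ℚ) ≤ 2 * a := by exact_mod_cast hsa
  -- the bound `s (2m - s - 2) + 2` on `2k` is increasing in `s` as long as `s ≤ m - 1`
  nlinarith [mul_nonneg (sub_nonneg.mpr hs) (by linarith : (0 : ℚ) ≤ 2 * m - 2 - 2 * x - s)]

section ColourClasses

variable {m k : ℕ} (Γ : Sym2 (Fin m) → Fin k)

def colourClass (c : Fin k) : Finset (Sym2 (Fin m)) := {e | ¬e.IsDiag ∧ Γ e = c}

def colourClassSupport (c : Fin k) : Finset (Fin m) := (colourClass Γ c).biUnion Sym2.toFinset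

theorem sum_card_colourClass : ∑ c, #(colourClass Γ c) = m.choose 2 := by
  have := card_filter_not_isDiag (α := Fin m)
  rw [Fintype.card_fin, card_eq_sum_card_fiberwise (fun e _ => mem_univ (Γ e))] at this
  simpa only [colourClass, filter_filter] using this

theorem mul_le_choose_two_of_le_card_colourClass {x : ℕ}
    (h : ∀ c, x + 1 ≤ #(colourClass Γ c)) : k * (x + 1) ≤ m.choose 2 := by
  calc k * (x + 1) = ∑ _c : Fin k, (x + 1) := by simp
    _ ≤ ∑ c, #(colourClass Γ c) := sum_le_sum fun c _ => h c
    _ = m.choose 2 := sum_card_colourClass Γ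

theorem card_colourClassSupport_le (c : Fin k) :
    #(colourClassSupport Γ c) ≤ 2 * #(colourClass Γ c) := by
  calc #(colourClassSupport Γ c) ≤ ∑ e ∈ colourClass Γ c, #e.toFinset := card_biUnion_le
    _ ≤ ∑ _e ∈ colourClass Γ c, 2 := sum_le_sum fun e _ => by
        rw [Sym2.card_toFinset]; split_ifs <;> omega
    _ = 2 * #(colourClass Γ c) := by rw [sum_const, smul_eq_mul, mul_comm]

end ColourClasses

namespace IsCompleteEdgeColouring

variable {m k : ℕ} {Γ : Sym2 (Fin m) → Fin k}

/-- Every colour other than `c` occurs on an edge meeting the support of the class of `c`,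
because it is adjacent to that class. -/
theorem add_card_colourClass_le (hΓ : IsCompleteEdgeColouring Γ) (c : Fin k) :
    k + #(colourClass Γ c) ≤ #(edgesMeeting (colourClassSupport Γ c)) + 1 := by
  set I := edgesMeeting (colourClassSupport Γ c)
  have class_sub : colourClass Γ c ⊆ I := by
    intro e he
    have he' := he
    simp only [colourClass, mem_filter_univ] at he'
    simp only [I, edgesMeeting, colourClassSupport, mem_filter_univ, mem_biUnion,
      Sym2.mem_toFinset]
    exact ⟨he'.1, _, ⟨e, he, e.out_fst_mem⟩, e.out_fst_mem⟩
  have surj : Set.SurjOn Γ ↑(I \ colourClass Γ c) ↑(univ.erase c) := by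
    intro d hd
    simp only [coe_erase, coe_univ, Set.mem_sdiff, Set.mem_univ, Set.mem_singleton_iff,
      true_and] at hd
    obtain ⟨u, v, w, huv, huw, hv, hw⟩ := hΓ.2 c d (Ne.symm hd)
    refine ⟨s(u, w), ?_, hw⟩
    simp only [I, edgesMeeting, colourClass, colourClassSupport, coe_sdiff, Set.mem_sdiff,
      mem_coe, mem_filter_univ, mem_biUnion, Sym2.mem_toFinset, Sym2.mk_isDiag_iff, hw, hd,
      and_false, not_false_eq_true, and_true]
    exact ⟨huw, u, ⟨s(u, v), ⟨huv, hv⟩, Sym2.mem_mk_left u v⟩, Sym2.mem_mk_left u w⟩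
  have := card_le_card_of_surjOn Γ surj
  rw [card_erase_of_mem (mem_univ c), card_univ, Fintype.card_fin] at this
  have := card_sdiff_add_card_eq_card class_sub
  have := c.pos
  omega

theorem le_of_card_colourClass_le (hΓ : IsCompleteEdgeColouring Γ) {x : ℕ} (c : Fin k)
    (hc : #(colourClass Γ c) ≤ x) (hxm : 2 * x + 1 ≤ m) : k ≤ 2 * x * (m - x - 1) + 1 := by
  have hk := hΓ.add_card_colourClass_le c
  have hI := card_edgesMeeting_add_choose_two_le (colourClassSupport Γ c)
  rw [Fintype.card_fin] at hI
  exact le_of_add_add_choose_two_le (card_colourClassSupport_le Γ c) hc hxm (by omega)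

theorem le_choose_two_div_or_le (hΓ : IsCompleteEdgeColouring Γ) {x : ℕ} (hxm : 2 * x + 1 ≤ m) :
    k ≤ m.choose 2 / (x + 1) ∨ k ≤ 2 * x * (m - x - 1) + 1 := by
  by_cases h : ∀ c, x + 1 ≤ #(colourClass Γ c)
  · exact .inl <| (Nat.le_div_iff_mul_le x.succ_pos).mpr
      (mul_le_choose_two_of_le_card_colourClass Γ h)
  · obtain ⟨c, hc⟩ := not_forall.mp h
    exact .inr <| hΓ.le_of_card_colourClass_le c (by omega) hxm

end IsCompleteEdgeColouring

theorem pseudoachromaticIndex_le_max {x m : ℕ} (hxm : 2 * x + 1 ≤ m) :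
    pseudoachromaticIndex m ≤ max (m.choose 2 / (x + 1)) (2 * x * (m - x - 1) + 1) :=
  csSup_le' fun _ ⟨_, hΓ⟩ =>
    (hΓ.le_choose_two_div_or_le hxm).elim le_max_of_le_left le_max_of_le_right

theorem choose_two_div_le {x m : ℕ} (hx : 1 ≤ x) (h₁ : 4 * x ^ 2 - x ≤ m)
    (h₂ : m ≤ 4 * x ^ 2 + 3 * x - 1) : m.choose 2 / (x + 1) ≤ 2 * x * (m - x - 1) + 1 := by
  refine Nat.div_le_of_le_mul ?_
  have hxm : x + 1 ≤ m := by
    have : 2 * x + 1 ≤ 4 * x ^ 2 := by nlinarith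
    omega
  rw [show m - x - 1 = m - (x + 1) by omega, ← Nat.cast_le (α := ℚ)]
  push_cast [Nat.cast_choose_two, Nat.cast_sub hxm]
  have p₁ : (0 : ℚ) ≤ m + x - 4 * x ^ 2 := by
    have : 4 * x ^ 2 ≤ m + x := by omega
    rw [sub_nonneg]; exact_mod_cast this
  have p₂ : (0 : ℚ) ≤ 4 * x ^ 2 + 3 * x - 1 - m := by
    have : m + 1 ≤ 4 * x ^ 2 + 3 * x := by omega
    rw [sub_nonneg, le_sub_iff_add_le]; exact_mod_cast this
  have p₃ : (0 : ℚ) ≤ 4 * x ^ 2 - 2 * x - 2 := by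
    have : (1 : ℚ) ≤ x := by exact_mod_cast hx
    nlinarith
  -- twice the gap between the two sides is `p₁ p₂ + p₃ p₂ + 3x² + 3x`
  nlinarith [mul_nonneg p₁ p₂, mul_nonneg p₃ p₂]

theorem le_choose_two_div {x m : ℕ} (hx : 2 ≤ x) (h : 4 * x ^ 2 + 3 * x ≤ m) :
    2 * x * (m - x - 1) + 1 ≤ m.choose 2 / (x + 1) := by
  rw [Nat.le_div_iff_mul_le x.succ_pos]
  obtain ⟨t, rfl⟩ := Nat.exists_eq_add_of_le h
  rw [show 4 * x ^ 2 + 3 * x + t - x - 1 = 4 * x ^ 2 + 2 * x - 1 + t by omega,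
    ← Nat.cast_le (α := ℚ)]
  push_cast [Nat.cast_choose_two, Nat.cast_sub (show 1 ≤ 4 * x ^ 2 + 2 * x by nlinarith)]
  have hx' : (2 : ℚ) ≤ x := by exact_mod_cast hx
  have ht : (0 : ℚ) ≤ t := t.cast_nonneg
  -- twice the gap between the two sides is `t² + (4x² + 2x - 1) t + (x - 2)(x + 1)`
  nlinarith [mul_nonneg ht ht, mul_nonneg ht (by nlinarith : (0 : ℚ) ≤ 4 * x ^ 2 + 2 * x - 1),
    mul_nonneg (sub_nonneg.mpr hx') (by positivity : (0 : ℚ) ≤ x + 1)]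

theorem stmt_4_general (x m : ℕ) (hx : 2 ≤ x) :
    (4 * x ^ 2 - x ≤ m ∧ m ≤ 4 * x ^ 2 + 3 * x - 1 →
      pseudoachromaticIndex m ≤ 2 * x * (m - x - 1) + 1) ∧
    (4 * x ^ 2 + 3 * x ≤ m ∧ m ≤ 4 * (x + 1) ^ 2 - (x + 1) - 1 →
      pseudoachromaticIndex m ≤ (m * (m - 1) / 2) / (x + 1)) := by
  have hxm : 2 * x + 1 ≤ 4 * x ^ 2 - x := by
    have : 3 * x + 1 ≤ 4 * x ^ 2 := by nlinarith
    omega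
  refine ⟨fun ⟨h₁, h₂⟩ => ?_, fun ⟨h₁, _⟩ => ?_⟩
  · exact (pseudoachromaticIndex_le_max (hxm.trans h₁)).trans
      (max_le (choose_two_div_le (by omega) h₁ h₂) le_rfl)
  · rw [← Nat.choose_two_right]
    exact (pseudoachromaticIndex_le_max (by omega)).trans
      (max_le le_rfl (le_choose_two_div hx h₁))

theorem stmt_4 (x m : ℕ) (hx : 2 ≤ x) (hm : 0 < m) :
    (4 * x ^ 2 - x ≤ m ∧ m ≤ 4 * x ^ 2 + 3 * x - 1 →
      pseudoachromaticIndex m ≤ 2 * x * (m - x - 1) + 1) ∧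
    (4 * x ^ 2 + 3 * x ≤ m ∧ m ≤ 4 * (x + 1) ^ 2 - (x + 1) - 1 →
      pseudoachromaticIndex m ≤ (m * (m - 1) / 2) / (x + 1)) :=
  stmt_4_general x m hx
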